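/- Let Ω ⊂ P(ℝ^d) be a properly convex domain, x₊, x₋ ∈ closure(Ω) with the open segment (x₊, x₋) contained in Ω, and let y₊ ∈ F_Ω(x₊), y₋ ∈ F_Ω(x₋) lie in the faces of x₊, x₋ respectively. Then the open segment (y₊, y₋) is contained in Ω, and the Hausdorff distance (w.r.t. the Hilbert metric of Ω) between (y₊,y₋) and (x₊,x₋) is at most max( d_{F_Ω(x₊)}(x₊,y₊), d_{F_Ω(x₋)}(x₋,y₋) ). -/

import Mathlib

/-!
Write `x₊ = (1 - α₊) p₊ + α₊ y₊` and `y₊ = γ₊ x₊ + (1 - γ₊) q₊`, where `p₊, q₊` are the ends of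
the chord of the face through `x₊` and `y₊`; then `d_F(x₊, y₊) = ½ log (α₊ γ₊)⁻¹`, and after
moving `q₊` or `q₋` towards `x₊` or `x₋` we may assume `α₊ γ₊ = α₋ γ₋ = κ`. For weights
`s, t > 0` put `X = s x₊ + t x₋` and `Y = s α₊ y₊ + t α₋ y₋`. Then `X - Y` is a positive
combination of `p₊, p₋` and `Y - κ X` one of `q₊, q₋`, so the line through the normalised points
`Y ∈ (y₊, y₋)` and `X ∈ (x₊, x₋)` meets `closure Ω` beyond `X` and beyond `Y` in two points
whose cross-ratio with `Y` and `X` is `κ⁻¹`. This gives `Y ∈ Ω` and `d_Ω(Y, X) ≤ ½ log κ⁻¹`,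
and as `(s, t)` varies both `X` and `Y` sweep their whole open segments.
-/

open Classical in
/-- The Hilbert (cross-ratio) distance of a convex domain `Ω`, in an affine-chart model:
`d_Ω(x,y) = ½ log [a,b;x,y]` computed along the chord of `Ω` through `x` and `y`. -/
noncomputable def hilbertDist {E : Type*} [NormedAddCommGroup E] [NormedSpace ℝ E]
    (Ω : Set E) (x y : E) : ℝ :=
  if x = y then 0
  else
    (1 / 2) * Real.log
      (((1 - sInf {t : ℝ | x + t • (y - x) ∈ Ω}) * sSup {t : ℝ | x + t • (y - x) ∈ Ω}) /
        ((-sInf {t : ℝ | x + t • (y - x) ∈ Ω}) * (sSup {t : ℝ | x + t • (y - x) ∈ Ω} - 1)))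

/-- A properly convex domain, in an affine-chart model: a nonempty bounded open convex set. -/
def IsProperlyConvex {E : Type*} [NormedAddCommGroup E] [NormedSpace ℝ E] (Ω : Set E) : Prop :=
  IsOpen Ω ∧ Convex ℝ Ω ∧ Bornology.IsBounded Ω ∧ Ω.Nonempty

/-- The open face of the convex set `K` containing the point `x` (for `Ω` open convex and
`x ∈ Ω`, `openFace (closure Ω) x = Ω`; for `x ∈ ∂Ω` it is the face of `∂Ω` containing `x`). -/
def openFace {E : Type*} [NormedAddCommGroup E] [NormedSpace ℝ E] (K : Set E) (x : E) : Set E :=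
  {y | y = x ∨ ∃ a ∈ K, ∃ b ∈ K, x ∈ openSegment ℝ a b ∧ y ∈ openSegment ℝ a b}

open Set AffineMap Topology

noncomputable def chordRatio (a b : ℝ) : ℝ := ((1 - a) * b) / ((-a) * (b - 1))

lemma one_lt_chordRatio {a b : ℝ} (ha : a < 0) (hb : 1 < b) : 1 < chordRatio a b := by
  unfold chordRatio
  rw [one_lt_div (by nlinarith)]
  nlinarith

lemma chordRatio_le_chordRatio {a a' b b' : ℝ} (haa' : a ≤ a') (ha' : a' < 0) (hb' : 1 < b')
    (hbb' : b' ≤ b) : chordRatio a b ≤ chordRatio a' b' := by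
  unfold chordRatio
  rw [div_le_div_iff₀ (by nlinarith) (by nlinarith)]
  nlinarith [mul_le_mul (show (1 - a) * -a' ≤ (1 - a') * -a by nlinarith)
    (show b * (b' - 1) ≤ b' * (b - 1) by nlinarith) (by nlinarith) (by nlinarith)]

lemma inv_chordRatio {a b : ℝ} (ha : a < 0) (hb : 1 < b) :
    (chordRatio a b)⁻¹ = a / (a - 1) * ((b - 1) / b) := by
  rw [chordRatio, inv_div, div_mul_div_comm,
    div_eq_div_iff (by nlinarith) (mul_ne_zero (by linarith) (by linarith))]
  ring

section ChordWeights

variable {E : Type*} [AddCommGroup E] [Module ℝ E] {C : Set E}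

/-- The line through `x` and `y` meets `C` at `p` beyond `x` and at `q` beyond `y`, where
`x` divides `[p, y]` with weight `α` and `y` divides `[q, x]` with weight `γ`; the cross-ratio
of `p, x, y, q` is then `(α * γ)⁻¹`. -/
def ChordWeights (C : Set E) (x y : E) (α γ : ℝ) : Prop :=
  α ∈ Ioo 0 1 ∧ γ ∈ Ioo 0 1 ∧ ∃ p ∈ C, ∃ q ∈ C, x = lineMap p y α ∧ y = lineMap q x γ

lemma chordWeights_of_chord {x y : E} {a b : ℝ} (ha : a < 0) (hb : 1 < b)
    (hpa : x + a • (y - x) ∈ C) (hpb : x + b • (y - x) ∈ C) :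
    ChordWeights C x y (a / (a - 1)) ((b - 1) / b) := by
  have ha1 : a - 1 ≠ 0 := by linarith
  have hb0 : b ≠ 0 := by linarith
  refine ⟨⟨div_pos_of_neg_of_neg ha (by linarith),
      (div_lt_one_of_neg (by linarith)).2 (by linarith)⟩,
    ⟨div_pos (by linarith) (by linarith), (div_lt_one (by linarith)).2 (by linarith)⟩,
    _, hpa, _, hpb, ?_, ?_⟩ <;>
  · rw [lineMap_apply_module]
    match_scalars <;> field_simp <;> ring

lemma ChordWeights.mono (hC : Convex ℝ C) {x y : E} {α γ γ' : ℝ} (h : ChordWeights C x y α γ)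
    (hx : x ∈ C) (hγ' : 0 < γ') (hγ'γ : γ' ≤ γ) : ChordWeights C x y α γ' := by
  obtain ⟨hα, hγ, p, hp, q, hq, hxp, hyq⟩ := h
  have hγ'1 : γ' < 1 := hγ'γ.trans_lt hγ.2
  refine ⟨hα, ⟨hγ', hγ'1⟩, p, hp, lineMap q x ((γ - γ') / (1 - γ')),
    hC.lineMap_mem hq hx ⟨div_nonneg (by linarith) (by linarith),
      (div_le_one (by linarith)).2 (by linarith [hγ.2])⟩, hxp, ?_⟩
  have : 1 - γ' ≠ 0 := by linarith
  rw [hyq]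
  simp only [lineMap_apply_module]
  match_scalars <;> field_simp <;> ring

lemma div_add_mem_Ioo {s t : ℝ} (hs : 0 < s) (ht : 0 < t) : t / (s + t) ∈ Ioo 0 1 :=
  ⟨by positivity, (div_lt_one (by positivity)).2 (by linarith)⟩

lemma exists_lineMap_of_chordWeights (hC : Convex ℝ C) {xp yp xm ym : E} {αp γp αm γm : ℝ}
    (hp : ChordWeights C xp yp αp γp) (hm : ChordWeights C xm ym αm γm)
    (hκ : αp * γp = αm * γm) {s t : ℝ} (hs : 0 < s) (ht : 0 < t) :
    ∃ a ∈ C, ∃ b ∈ C, ∃ φ θ : ℝ, φ ∈ Ioc 0 1 ∧ θ ∈ Ioc 0 1 ∧ φ * θ = αp * γp ∧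
      lineMap yp ym (t * αm / (s * αp + t * αm)) =
        lineMap a (lineMap xp xm (t / (s + t))) φ ∧
      lineMap xp xm (t / (s + t)) =
        lineMap b (lineMap yp ym (t * αm / (s * αp + t * αm))) θ := by
  obtain ⟨⟨hαp0, hαp1⟩, ⟨hγp0, hγp1⟩, pp, hpp, qp, hqp, hxp, hyp⟩ := hp
  obtain ⟨⟨hαm0, hαm1⟩, ⟨hγm0, hγm1⟩, pm, hpm, qm, hqm, hxm, hym⟩ := hm
  have hw : 0 < s * αp + t * αm := by positivity
  have hφ : αp * γp * (s + t) / (s * αp + t * αm) < 1 := by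
    rw [div_lt_one hw]
    nlinarith [mul_lt_mul_of_pos_left hγp1 (mul_pos hs hαp0),
      mul_lt_mul_of_pos_left hγm1 (mul_pos ht hαm0)]
  have hθ : (s * αp + t * αm) / (s + t) < 1 := by
    rw [div_lt_one (by positivity)]
    nlinarith [mul_lt_mul_of_pos_left hαp1 hs, mul_lt_mul_of_pos_left hαm1 ht]
  refine ⟨lineMap qp qm (t * (αm * (1 - γm)) / (s * (αp * (1 - γp)) + t * (αm * (1 - γm)))),
    hC.lineMap_mem hqp hqm (Ioo_subset_Icc_self (div_add_mem_Ioo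
      (mul_pos hs (mul_pos hαp0 (sub_pos.2 hγp1))) (mul_pos ht (mul_pos hαm0 (sub_pos.2 hγm1))))),
    lineMap pp pm (t * (1 - αm) / (s * (1 - αp) + t * (1 - αm))),
    hC.lineMap_mem hpp hpm (Ioo_subset_Icc_self (div_add_mem_Ioo
      (mul_pos hs (sub_pos.2 hαp1)) (mul_pos ht (sub_pos.2 hαm1)))),
    αp * γp * (s + t) / (s * αp + t * αm), (s * αp + t * αm) / (s + t),
    ⟨by positivity, hφ.le⟩, ⟨by positivity, hθ.le⟩, by field_simp, ?_, ?_⟩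
  -- before normalising, with `κ = αp γp = αm γm`:
  -- `s αp yp + t αm ym - κ (s xp + t xm) = s αp (1 - γp) qp + t αm (1 - γm) qm`
  · rw [hyp, hym]
    simp only [lineMap_apply_module]
    match_scalars <;> field_simp
    · linear_combination s * αp * t * (1 - γp) * hκ
    · ring
    · linear_combination t * hκ
    · linear_combination -hκ
  · rw [hxp, hxm]
    simp only [lineMap_apply_module]
    match_scalars <;> field_simp <;> ring

end ChordWeights

section HilbertDist

variable {E : Type*} [NormedAddCommGroup E] [NormedSpace ℝ E] {Ω K : Set E}

def lineParams (Ω : Set E) (x y : E) : Set ℝ := {t | x + t • (y - x) ∈ Ω}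

lemma hilbertDist_of_ne (Ω : Set E) {x y : E} (h : x ≠ y) :
    hilbertDist Ω x y =
      1 / 2 * Real.log (chordRatio (sInf (lineParams Ω x y)) (sSup (lineParams Ω x y))) :=
  if_neg h

lemma Bornology.IsBounded.lineParams (hΩ : Bornology.IsBounded Ω) {x y : E}
    (h : x ≠ y) : Bornology.IsBounded (lineParams Ω x y) := by
  have hyx : 0 < ‖y - x‖ := norm_pos_iff.2 (sub_ne_zero.2 h.symm)
  refine (AntilipschitzWith.of_le_mul_dist (K := ‖y - x‖₊⁻¹) fun s t => ?_).isBounded_preimage hΩ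
  rw [dist_add_left, dist_eq_norm, dist_eq_norm, ← sub_smul, norm_smul, NNReal.coe_inv,
    coe_nnnorm, mul_comm ‖s - t‖, inv_mul_cancel_left₀ hyx.ne']

lemma add_smul_mem_of_add_smul_mem_closure (hΩo : IsOpen Ω) (hΩc : Convex ℝ Ω)
    {x w : E} {s t : ℝ} (hx : x ∈ Ω) (hs : x + s • w ∈ closure Ω) (ht : 0 ≤ t) (hts : t < s) :
    x + t • w ∈ Ω := by
  have hs0 : 0 < s := ht.trans_lt hts
  have h := hΩc.combo_interior_closure_mem_interior (hΩo.interior_eq.symm ▸ hx) hs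
    (a := 1 - t / s) (b := t / s) (by rw [sub_pos, div_lt_one hs0]; exact hts)
    (div_nonneg ht hs0.le) (by ring)
  rw [hΩo.interior_eq] at h
  convert h using 1
  match_scalars <;> field_simp; ring

lemma Ioo_subset_lineParams (hΩo : IsOpen Ω) (hΩc : Convex ℝ Ω) {u v : E}
    (hu : u ∈ Ω) {A B : ℝ} (hA : u + A • (v - u) ∈ closure Ω) (hB : u + B • (v - u) ∈ closure Ω) :
    Ioo A B ⊆ lineParams Ω u v := by
  rintro t ⟨hAt, htB⟩
  rcases le_or_gt 0 t with ht | ht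
  · exact add_smul_mem_of_add_smul_mem_closure hΩo hΩc hu hB ht htB
  · rw [← neg_smul_neg] at hA
    show u + t • (v - u) ∈ Ω
    simpa only [neg_smul_neg] using
      add_smul_mem_of_add_smul_mem_closure hΩo hΩc hu hA (neg_nonneg.2 ht.le) (neg_lt_neg hAt)

lemma chordRatio_sInf_sSup_le {S : Set ℝ} (hS : Bornology.IsBounded S) {A B : ℝ} (hA : A < 0)
    (hB : 1 < B) (hAB : Ioo A B ⊆ S) :
    1 < chordRatio (sInf S) (sSup S) ∧ chordRatio (sInf S) (sSup S) ≤ chordRatio A B := by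
  have hAB' : A < B := by linarith
  have hinf : sInf S ≤ A := csInf_Ioo hAB' ▸ csInf_le_csInf hS.bddBelow (nonempty_Ioo.2 hAB') hAB
  have hsup : B ≤ sSup S := csSup_Ioo hAB' ▸ csSup_le_csSup hS.bddAbove (nonempty_Ioo.2 hAB') hAB
  exact ⟨one_lt_chordRatio (by linarith) (by linarith),
    chordRatio_le_chordRatio hinf hA hB hsup⟩

lemma hilbertDist_le_of_lineMap (hΩo : IsOpen Ω) (hΩc : Convex ℝ Ω)
    (hΩb : Bornology.IsBounded Ω) {u v a b : E} {φ θ : ℝ} (hu : u ∈ Ω) (ha : a ∈ closure Ω)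
    (hb : b ∈ closure Ω) (hφ : φ ∈ Ioc 0 1) (hθ : θ ∈ Ioc 0 1) (hua : u = lineMap a v φ)
    (hvb : v = lineMap b u θ) : hilbertDist Ω u v ≤ 1 / 2 * Real.log (φ * θ)⁻¹ := by
  obtain ⟨hφ0, hφ1⟩ := hφ
  obtain ⟨hθ0, hθ1⟩ := hθ
  by_cases huv : u = v
  · rw [hilbertDist, if_pos huv]
    exact mul_nonneg (by norm_num) (Real.log_nonneg ((one_le_inv₀ (by positivity)).2
      (mul_le_one₀ hφ1 hθ0.le hθ1)))
  replace hφ1 : φ < 1 := hφ1.lt_of_ne (by rintro rfl; exact huv (hua.trans (lineMap_apply_one _ _)))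
  replace hθ1 : θ < 1 :=
    hθ1.lt_of_ne (by rintro rfl; exact huv (hvb.trans (lineMap_apply_one _ _)).symm)
  have hA : u + (-(φ / (1 - φ))) • (v - u) = a := by
    rw [hua, lineMap_apply_module]
    match_scalars <;> field_simp [sub_ne_zero.2 hφ1.ne'] <;> ring
  have hB : u + (1 - θ)⁻¹ • (v - u) = b := by
    rw [hvb, lineMap_apply_module]
    match_scalars <;> field_simp [sub_ne_zero.2 hθ1.ne']
    ring
  have hratio : chordRatio (-(φ / (1 - φ))) (1 - θ)⁻¹ = (φ * θ)⁻¹ := by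
    unfold chordRatio
    field_simp [sub_ne_zero.2 hφ1.ne', sub_ne_zero.2 hθ1.ne', hθ0.ne']
    ring
  obtain ⟨hone, hle⟩ := chordRatio_sInf_sSup_le (hΩb.lineParams huv)
    (neg_neg_of_pos (div_pos hφ0 (by linarith))) ((one_lt_inv₀ (by linarith)).2 (by linarith))
    (Ioo_subset_lineParams hΩo hΩc hu (hA ▸ ha) (hB ▸ hb))
  rw [hilbertDist_of_ne Ω huv, ← hratio]
  gcongr

lemma hilbertDist_nonneg (hΩo : IsOpen Ω) (hΩc : Convex ℝ Ω) (hΩb : Bornology.IsBounded Ω)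
    {u v : E} (hu : u ∈ Ω) (hv : v ∈ Ω) : 0 ≤ hilbertDist Ω u v := by
  by_cases huv : u = v
  · rw [hilbertDist, if_pos huv]
  have hS : IsOpen (lineParams Ω u v) := hΩo.preimage (by fun_prop)
  have h0 : ∀ᶠ t in 𝓝 (0 : ℝ), t ∈ lineParams Ω u v := hS.mem_nhds (by simpa [lineParams])
  have h1 : ∀ᶠ t in 𝓝 (1 : ℝ), t ∈ lineParams Ω u v := hS.mem_nhds (by simpa [lineParams])
  obtain ⟨A, hA, hAS⟩ := h0.exists_lt
  obtain ⟨B, hB, hBS⟩ := h1.exists_gt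
  obtain ⟨hone, -⟩ := chordRatio_sInf_sSup_le (hΩb.lineParams huv) hA hB
    (Ioo_subset_lineParams hΩo hΩc hu (subset_closure hAS) (subset_closure hBS))
  rw [hilbertDist_of_ne Ω huv]
  exact mul_nonneg (by norm_num) (Real.log_nonneg hone.le)

lemma openFace_subset (hK : Convex ℝ K) {x : E} (hx : x ∈ K) : openFace K x ⊆ K := by
  rintro y (rfl | ⟨a, ha, b, hb, -, hy⟩)
  · exact hx
  · exact hK.segment_subset ha hb (openSegment_subset_segment ℝ a b hy)

lemma exists_mem_lineParams_openFace {x y : E} (hy : y ∈ openFace K x) :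
    ∃ A < 0, ∃ B > 1, A ∈ lineParams (openFace K x) x y ∧ B ∈ lineParams (openFace K x) x y := by
  rcases hy with rfl | ⟨a, ha, b, hb, hx, hy⟩
  · exact ⟨-1, by norm_num, 2, by norm_num, by simp [lineParams, openFace],
      by simp [lineParams, openFace]⟩
  rw [openSegment_eq_image_lineMap] at hx hy
  obtain ⟨q, hq, rfl⟩ := hx
  obtain ⟨q', hq', rfl⟩ := hy
  -- the line through `x` and `y` is the line through `a` and `b`, reparametrised
  have hT : IsOpen {t : ℝ | q + t * (q' - q) ∈ Ioo 0 1} := isOpen_Ioo.preimage (by fun_prop)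
  have hTS : {t : ℝ | q + t * (q' - q) ∈ Ioo 0 1} ⊆
      lineParams (openFace K (lineMap a b q)) (lineMap a b q) (lineMap a b q') := by
    intro t ht
    refine Or.inr ⟨a, ha, b, hb, lineMap_mem_openSegment ℝ a b hq, ?_⟩
    convert lineMap_mem_openSegment ℝ a b ht using 1
    simp only [lineMap_apply_module]
    module
  have h0 : ∀ᶠ t in 𝓝 (0 : ℝ), q + t * (q' - q) ∈ Ioo 0 1 := hT.mem_nhds (by simpa using hq)
  have h1 : ∀ᶠ t in 𝓝 (1 : ℝ), q + t * (q' - q) ∈ Ioo 0 1 := hT.mem_nhds (by simpa using hq')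
  obtain ⟨A, hA, hAT⟩ := h0.exists_lt
  obtain ⟨B, hB, hBT⟩ := h1.exists_gt
  exact ⟨A, hA, B, hB, hTS hAT, hTS hBT⟩

lemma exists_chord_of_mem_openFace (hKc : IsClosed K) (hKcv : Convex ℝ K)
    (hKb : Bornology.IsBounded K) {x y : E} (hx : x ∈ K) (hy : y ∈ openFace K x) (hyx : y ≠ x) :
    ∃ a < 0, ∃ b > 1, hilbertDist (openFace K x) x y = 1 / 2 * Real.log (chordRatio a b) ∧
      x + a • (y - x) ∈ K ∧ x + b • (y - x) ∈ K := by
  set S := lineParams (openFace K x) x y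
  have hFK := openFace_subset hKcv hx
  have hS : Bornology.IsBounded S := (hKb.subset hFK).lineParams hyx.symm
  obtain ⟨A, hA, B, hB, hAS, hBS⟩ := exists_mem_lineParams_openFace hy
  have hmaps : MapsTo (fun t : ℝ => x + t • (y - x)) S K := fun t ht => hFK ht
  have hend : ∀ t ∈ closure S, x + t • (y - x) ∈ K := fun t ht =>
    hKc.closure_subset (map_mem_closure (f := fun t : ℝ => x + t • (y - x)) (by fun_prop) ht hmaps)
  refine ⟨sInf S, (csInf_le hS.bddBelow hAS).trans_lt hA, sSup S,
    hB.trans_le (le_csSup hS.bddAbove hBS), hilbertDist_of_ne _ hyx.symm,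
    hend _ (csInf_mem_closure ⟨A, hAS⟩ hS.bddBelow),
    hend _ (csSup_mem_closure ⟨A, hAS⟩ hS.bddAbove)⟩

lemma hilbertDist_openFace_nonneg (hKc : IsClosed K) (hKcv : Convex ℝ K)
    (hKb : Bornology.IsBounded K) {x y : E} (hx : x ∈ K) (hy : y ∈ openFace K x) :
    0 ≤ hilbertDist (openFace K x) x y := by
  by_cases hyx : y = x
  · rw [hilbertDist, if_pos hyx.symm]
  obtain ⟨a, ha, b, hb, hdist, -⟩ := exists_chord_of_mem_openFace hKc hKcv hKb hx hy hyx
  rw [hdist]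
  exact mul_nonneg (by norm_num) (Real.log_nonneg (one_lt_chordRatio ha hb).le)

lemma exists_chordWeights_of_mem_openFace (hKc : IsClosed K) (hKcv : Convex ℝ K)
    (hKb : Bornology.IsBounded K) {x y : E} (hx : x ∈ K) (hy : y ∈ openFace K x) {κ : ℝ}
    (hκ : κ ∈ Ioo 0 1) (hd : hilbertDist (openFace K x) x y ≤ 1 / 2 * Real.log κ⁻¹) :
    ∃ α γ, α * γ = κ ∧ ChordWeights K x y α γ := by
  obtain ⟨hκ0, hκ1⟩ := hκ
  by_cases hyx : y = x
  · subst hyx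
    have hs : Real.sqrt κ ∈ Ioo 0 1 :=
      ⟨Real.sqrt_pos.2 hκ0, (Real.sqrt_lt' one_pos).2 (by simpa using hκ1)⟩
    exact ⟨_, _, Real.mul_self_sqrt hκ0.le, hs, hs, y, hx, y, hx, by simp, by simp⟩
  obtain ⟨a, ha, b, hb, hdist, hpa, hpb⟩ := exists_chord_of_mem_openFace hKc hKcv hKb hx hy hyx
  have hw := chordWeights_of_chord ha hb hpa hpb
  have hα : 0 < a / (a - 1) := hw.1.1
  have hκle : κ ≤ a / (a - 1) * ((b - 1) / b) := by
    rw [← inv_chordRatio ha hb]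
    rw [hdist] at hd
    have hC := one_lt_chordRatio ha hb
    have : chordRatio a b ≤ κ⁻¹ :=
      (Real.log_le_log_iff (by linarith) (by positivity)).1 (by linarith)
    rwa [le_inv_comm₀ hκ0 (by linarith)]
  refine ⟨a / (a - 1), κ / (a / (a - 1)), mul_div_cancel₀ _ hα.ne',
    hw.mono hKcv hx (div_pos hκ0 hα) ((div_le_iff₀' hα).2 hκle)⟩

lemma exists_chordWeights_of_max_hilbertDist_lt (hKc : IsClosed K) (hKcv : Convex ℝ K)
    (hKb : Bornology.IsBounded K) {xp xm yp ym : E} (hxp : xp ∈ K) (hxm : xm ∈ K)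
    (hyp : yp ∈ openFace K xp) (hym : ym ∈ openFace K xm) {r : ℝ}
    (hr : max (hilbertDist (openFace K xp) xp yp) (hilbertDist (openFace K xm) xm ym) < r) :
    ∃ αp γp αm γm, ChordWeights K xp yp αp γp ∧ ChordWeights K xm ym αm γm ∧
      αp * γp = αm * γm ∧ 1 / 2 * Real.log (αp * γp)⁻¹ = r := by
  have hr0 : 0 < r :=
    (le_max_of_le_left (hilbertDist_openFace_nonneg hKc hKcv hKb hxp hyp)).trans_lt hr
  have hκ : Real.exp (-2 * r) ∈ Ioo 0 1 := ⟨Real.exp_pos _, Real.exp_lt_one_iff.2 (by linarith)⟩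
  have hlog : 1 / 2 * Real.log (Real.exp (-2 * r))⁻¹ = r := by
    rw [← Real.exp_neg, Real.log_exp]
    ring
  obtain ⟨αp, γp, hκp, hp⟩ := exists_chordWeights_of_mem_openFace hKc hKcv hKb hxp hyp hκ
    ((le_max_left _ _).trans (hr.le.trans hlog.ge))
  obtain ⟨αm, γm, hκm, hm⟩ := exists_chordWeights_of_mem_openFace hKc hKcv hKb hxm hym hκ
    ((le_max_right _ _).trans (hr.le.trans hlog.ge))
  exact ⟨αp, γp, αm, γm, hp, hm, hκp.trans hκm.symm, hκp ▸ hlog⟩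

lemma hilbertDist_lineMap_le_of_chordWeights (hΩo : IsOpen Ω) (hΩc : Convex ℝ Ω)
    (hΩb : Bornology.IsBounded Ω) {xp yp xm ym : E} {αp γp αm γm : ℝ}
    (hp : ChordWeights (closure Ω) xp yp αp γp) (hm : ChordWeights (closure Ω) xm ym αm γm)
    (hκ : αp * γp = αm * γm) (hseg : openSegment ℝ xp xm ⊆ Ω) {s t : ℝ} (hs : 0 < s)
    (ht : 0 < t) :
    lineMap yp ym (t * αm / (s * αp + t * αm)) ∈ Ω ∧
      hilbertDist Ω (lineMap yp ym (t * αm / (s * αp + t * αm))) (lineMap xp xm (t / (s + t))) ≤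
        1 / 2 * Real.log (αp * γp)⁻¹ := by
  obtain ⟨a, ha, b, hb, φ, θ, hφ, hθ, hφθ, hY, hX⟩ :=
    exists_lineMap_of_chordWeights hΩc.closure hp hm hκ hs ht
  have hXΩ : lineMap xp xm (t / (s + t)) ∈ Ω :=
    hseg (lineMap_mem_openSegment ℝ _ _ (div_add_mem_Ioo hs ht))
  have hYΩ : lineMap yp ym (t * αm / (s * αp + t * αm)) ∈ Ω := by
    have h := hΩc.combo_closure_interior_mem_interior ha (hΩo.interior_eq.symm ▸ hXΩ)
      (sub_nonneg.2 hφ.2) hφ.1 (sub_add_cancel 1 φ)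
    rwa [hΩo.interior_eq, ← lineMap_apply_module, ← hY] at h
  exact ⟨hYΩ, hφθ ▸ hilbertDist_le_of_lineMap hΩo hΩc hΩb hYΩ ha hb hφ hθ hY hX⟩

lemma exists_mem_openSegment_hilbertDist_le_left (hΩo : IsOpen Ω) (hΩc : Convex ℝ Ω)
    (hΩb : Bornology.IsBounded Ω) {xp yp xm ym : E} {αp γp αm γm : ℝ}
    (hp : ChordWeights (closure Ω) xp yp αp γp)
    (hm : ChordWeights (closure Ω) xm ym αm γm) (hκ : αp * γp = αm * γm)
    (hseg : openSegment ℝ xp xm ⊆ Ω) {u : E} (hu : u ∈ openSegment ℝ yp ym) :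
    u ∈ Ω ∧ ∃ v ∈ openSegment ℝ xp xm, hilbertDist Ω u v ≤ 1 / 2 * Real.log (αp * γp)⁻¹ := by
  rw [openSegment_eq_image_lineMap] at hu
  obtain ⟨l, ⟨hl0, hl1⟩, rfl⟩ := hu
  have hαp := hp.1.1
  have hαm := hm.1.1
  have hs : 0 < (1 - l) / αp := div_pos (by linarith) hαp
  have ht : 0 < l / αm := div_pos hl0 hαm
  have hl : l / αm * αm / ((1 - l) / αp * αp + l / αm * αm) = l := by
    field_simp
    ring
  obtain ⟨hYΩ, hd⟩ := hilbertDist_lineMap_le_of_chordWeights hΩo hΩc hΩb hp hm hκ hseg hs ht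
  rw [hl] at hYΩ hd
  exact ⟨hYΩ, _, lineMap_mem_openSegment ℝ _ _ (div_add_mem_Ioo hs ht), hd⟩

lemma exists_mem_openSegment_hilbertDist_le_right (hΩo : IsOpen Ω) (hΩc : Convex ℝ Ω)
    (hΩb : Bornology.IsBounded Ω) {xp yp xm ym : E} {αp γp αm γm : ℝ}
    (hp : ChordWeights (closure Ω) xp yp αp γp)
    (hm : ChordWeights (closure Ω) xm ym αm γm) (hκ : αp * γp = αm * γm)
    (hseg : openSegment ℝ xp xm ⊆ Ω) {v : E} (hv : v ∈ openSegment ℝ xp xm) :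
    ∃ u ∈ openSegment ℝ yp ym, hilbertDist Ω u v ≤ 1 / 2 * Real.log (αp * γp)⁻¹ := by
  rw [openSegment_eq_image_lineMap] at hv
  obtain ⟨n, ⟨hn0, hn1⟩, rfl⟩ := hv
  have hs : 0 < 1 - n := by linarith
  obtain ⟨-, hd⟩ := hilbertDist_lineMap_le_of_chordWeights hΩo hΩc hΩb hp hm hκ hseg hs hn0
  rw [sub_add_cancel, div_one] at hd
  exact ⟨_, lineMap_mem_openSegment ℝ _ _
    (div_add_mem_Ioo (mul_pos hs hp.1.1) (mul_pos hn0 hm.1.1)), hd⟩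

end HilbertDist

/-- if `(x₊, x₋) ⊆ Ω` with `x₊, x₋ ∈ closure Ω`, and `y₊, y₋` lie in the faces
`F_Ω(x₊)`, `F_Ω(x₋)` respectively, then `(y₊, y₋) ⊆ Ω` and the Hausdorff distance (w.r.t. the
Hilbert metric of `Ω`) between `(y₊,y₋)` and `(x₊,x₋)` is at most
`max (d_{F(x₊)}(x₊,y₊)) (d_{F(x₋)}(x₋,y₋))`. -/
theorem stmt11 {n : ℕ} (Ω : Set (EuclideanSpace ℝ (Fin n))) (hΩ : IsProperlyConvex Ω)
    (xp xm : EuclideanSpace ℝ (Fin n)) (hxp : xp ∈ closure Ω) (hxm : xm ∈ closure Ω)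
    (hseg : openSegment ℝ xp xm ⊆ Ω)
    (yp ym : EuclideanSpace ℝ (Fin n))
    (hyp : yp ∈ openFace (closure Ω) xp) (hym : ym ∈ openFace (closure Ω) xm) :
    openSegment ℝ yp ym ⊆ Ω ∧
    (∀ u ∈ openSegment ℝ yp ym,
      sInf {r : ℝ | ∃ v ∈ openSegment ℝ xp xm, r = hilbertDist Ω u v} ≤
        max (hilbertDist (openFace (closure Ω) xp) xp yp)
            (hilbertDist (openFace (closure Ω) xm) xm ym)) ∧
    (∀ v ∈ openSegment ℝ xp xm,
      sInf {r : ℝ | ∃ u ∈ openSegment ℝ yp ym, r = hilbertDist Ω u v} ≤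
        max (hilbertDist (openFace (closure Ω) xp) xp yp)
            (hilbertDist (openFace (closure Ω) xm) xm ym)) := by
  obtain ⟨hΩo, hΩc, hΩb, -⟩ := hΩ
  have hweights := fun r (hr : _ < r) => exists_chordWeights_of_max_hilbertDist_lt
    isClosed_closure hΩc.closure hΩb.closure hxp hxm hyp hym hr
  obtain ⟨αp, γp, αm, γm, hp, hm, hκ, -⟩ := hweights _ (lt_add_one _)
  have hyseg : openSegment ℝ yp ym ⊆ Ω := fun u hu =>
    (exists_mem_openSegment_hilbertDist_le_left hΩo hΩc hΩb hp hm hκ hseg hu).1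
  have hnonneg : ∀ u ∈ openSegment ℝ yp ym, ∀ v ∈ openSegment ℝ xp xm, 0 ≤ hilbertDist Ω u v :=
    fun u hu v hv => hilbertDist_nonneg hΩo hΩc hΩb (hyseg hu) (hseg hv)
  refine ⟨hyseg, fun u hu => le_of_forall_gt_imp_ge_of_dense fun r hr => ?_,
    fun v hv => le_of_forall_gt_imp_ge_of_dense fun r hr => ?_⟩
  · obtain ⟨αp, γp, αm, γm, hp, hm, hκ, rfl⟩ := hweights r hr
    obtain ⟨-, v, hv, hle⟩ :=
      exists_mem_openSegment_hilbertDist_le_left hΩo hΩc hΩb hp hm hκ hseg hu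
    exact csInf_le_of_le ⟨0, by rintro _ ⟨v, hv, rfl⟩; exact hnonneg u hu v hv⟩ ⟨v, hv, rfl⟩ hle
  · obtain ⟨αp, γp, αm, γm, hp, hm, hκ, rfl⟩ := hweights r hr
    obtain ⟨u, hu, hle⟩ := exists_mem_openSegment_hilbertDist_le_right hΩo hΩc hΩb hp hm hκ hseg hv
    exact csInf_le_of_le ⟨0, by rintro _ ⟨u, hu, rfl⟩; exact hnonneg u hu v hv⟩ ⟨u, hu, rfl⟩ hle
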